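/- Safety of the core Eff effect system (progress and preservation): if ⊢ c : A ! Δ holds for a closed computation c, then either c is of the form val e with ⊢ e : A, or c is an operation call ins#op(e; y. c') with ins#op ∈ Δ, or there exists c' with c ⤳ c' and ⊢ c' : A ! Δ. -/

import Mathlib

/-!
Progress and preservation are proved together, by induction on the typing derivation of the
closed computation. Subsumption is absorbed by a canonical-forms lemma stated up to subtyping:
a closed value whose type is below a function or handler type is a function or handler whose
body is typed at its principal type, which is exactly what the β- and handler reductions
consume; the reducts are then typed by the weakening and substitution lemmas. In the key case
`with h handle ins#op(v; y.k)` either a case of `h` handles `ins#op`, and its body is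
instantiated with `v` and the continuation `fun y ↦ with h handle k`, or none does, and then
the coverage premise of the handler rule puts `ins#op` into the outgoing dirt, so that the
forwarded call is still well typed.
-/

/-- Operations are pairs (instance, operation symbol). -/
abbrev Operation := ℕ × ℕ
/-- A dirt is a finite set of operations. -/
abbrev Dirt := Finset Operation
/-- A region is a finite set of instances. -/
abbrev Region := Finset ℕ

/-- Closed core Eff types: ground types, function types `A → (B ! Δ)`,
effect types `E^R` and handler types `(A ! Δ₁) ⇒ (B ! Δ₂)`. -/
inductive Ty : Type where
  | bool : Ty
  | nat : Ty
  | unit : Ty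
  | empty : Ty
  | fn : Ty → Ty → Dirt → Ty
  | eff : ℕ → Region → Ty
  | hand : Ty → Dirt → Ty → Dirt → Ty
  deriving DecidableEq

/-- Dirty types `A ! Δ`. -/
abbrev DirtyTy := Ty × Dirt

/-- Structural subtyping on core Eff types. -/
inductive SubTy : Ty → Ty → Prop where
  | bool : SubTy .bool .bool
  | nat : SubTy .nat .nat
  | unit : SubTy .unit .unit
  | empty : SubTy .empty .empty
  | fn {A A' B B' : Ty} {Δ Δ' : Dirt} :
      SubTy A' A → SubTy B B' → Δ ⊆ Δ' → SubTy (.fn A B Δ) (.fn A' B' Δ')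
  | eff {E : ℕ} {R R' : Region} : R ⊆ R' → SubTy (.eff E R) (.eff E R')
  | hand {A A' B B' : Ty} {Δ₁ Δ₁' Δ₂ Δ₂' : Dirt} :
      SubTy A' A → Δ₁' ⊆ Δ₁ → SubTy B B' → Δ₂ ⊆ Δ₂' →
      SubTy (.hand A Δ₁ B Δ₂) (.hand A' Δ₁' B' Δ₂')

/-- Subtyping of dirty types: `A ! Δ ≤ A' ! Δ'` iff `A ≤ A'` and `Δ ⊆ Δ'`. -/
def SubD (C C' : DirtyTy) : Prop := SubTy C.1 C'.1 ∧ C.2 ⊆ C'.2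
mutual
/-- Expressions of core Eff (de Bruijn representation). -/
inductive Expr : Type where
  | var : ℕ → Expr
  | tt : Expr
  | ff : Expr
  | zero : Expr
  | succ : Expr → Expr
  | unit : Expr
  | fn : Comp → Expr                    -- `fun x ↦ c`, binds one variable
  | inst : ℕ → Expr                     -- instance constant
  | handler : Comp → List OpCase → Expr -- value case (binds 1) and operation cases
/-- An operation case `e#op(x; k) ↦ c` of a handler; the body binds
the parameter `x` (de Bruijn index 1) and the continuation `k` (index 0). -/
inductive OpCase : Type where
  | mk : Expr → ℕ → Comp → OpCase
/-- Computations of core Eff (de Bruijn representation). -/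
inductive Comp : Type where
  | ite : Expr → Comp → Comp → Comp
  | iszero : Expr → Comp
  | pred : Expr → Comp
  | absurd : Expr → Comp
  | app : Expr → Expr → Comp
  | ret : Expr → Comp                      -- `val e`
  | call : Expr → ℕ → Expr → Comp → Comp   -- `e₁#op(e₂; y. c)`, `c` binds `y`
  | letin : Comp → Comp → Comp             -- `let x = c₁ in c₂`, `c₂` binds `x`
  | letval : Expr → Comp → Comp            -- `let val x = e in c`, `c` binds `x`
  | letrec : Comp → Comp → Comp            -- `c₁` binds `x` (0) and `f` (1); `c₂` binds `f`
  | withhandle : Expr → Comp → Comp        -- `with e handle c`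
end

/-- The operation symbol of an operation case. -/
def OpCase.opSym : OpCase → ℕ | .mk _ op _ => op
/-- The instance expression of an operation case. -/
def OpCase.instExpr : OpCase → Expr | .mk e _ _ => e
/-- The body of an operation case. -/
def OpCase.body : OpCase → Comp | .mk _ _ c => c

mutual
/-- Shift de Bruijn indices `≥ c` up by one in an expression. -/
def shiftE (c : ℕ) : Expr → Expr
  | .var n => if n < c then .var n else .var (n + 1)
  | .tt => .tt
  | .ff => .ff
  | .zero => .zero
  | .succ e => .succ (shiftE c e)
  | .unit => .unit
  | .fn b => .fn (shiftC (c + 1) b)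
  | .inst i => .inst i
  | .handler cv l => .handler (shiftC (c + 1) cv) (shiftCases c l)
/-- Shift an operation case. -/
def shiftCase (c : ℕ) : OpCase → OpCase
  | .mk e op b => .mk (shiftE c e) op (shiftC (c + 2) b)
/-- Shift a list of operation cases. -/
def shiftCases (c : ℕ) : List OpCase → List OpCase
  | [] => []
  | h :: t => shiftCase c h :: shiftCases c t
/-- Shift de Bruijn indices `≥ c` up by one in a computation. -/
def shiftC (c : ℕ) : Comp → Comp
  | .ite e c₁ c₂ => .ite (shiftE c e) (shiftC c c₁) (shiftC c c₂)
  | .iszero e => .iszero (shiftE c e)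
  | .pred e => .pred (shiftE c e)
  | .absurd e => .absurd (shiftE c e)
  | .app e₁ e₂ => .app (shiftE c e₁) (shiftE c e₂)
  | .ret e => .ret (shiftE c e)
  | .call e₁ op e₂ k => .call (shiftE c e₁) op (shiftE c e₂) (shiftC (c + 1) k)
  | .letin c₁ c₂ => .letin (shiftC c c₁) (shiftC (c + 1) c₂)
  | .letval e c₁ => .letval (shiftE c e) (shiftC (c + 1) c₁)
  | .letrec c₁ c₂ => .letrec (shiftC (c + 2) c₁) (shiftC (c + 1) c₂)
  | .withhandle e c₁ => .withhandle (shiftE c e) (shiftC c c₁)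
end

mutual
/-- Substitute `s` for de Bruijn index `k` in an expression. -/
def substE (k : ℕ) (s : Expr) : Expr → Expr
  | .var n => if n = k then s else if k < n then .var (n - 1) else .var n
  | .tt => .tt
  | .ff => .ff
  | .zero => .zero
  | .succ e => .succ (substE k s e)
  | .unit => .unit
  | .fn b => .fn (substC (k + 1) (shiftE 0 s) b)
  | .inst i => .inst i
  | .handler cv l => .handler (substC (k + 1) (shiftE 0 s) cv) (substCases k s l)
/-- Substitute in an operation case. -/
def substCase (k : ℕ) (s : Expr) : OpCase → OpCase
  | .mk e op b => .mk (substE k s e) op (substC (k + 2) (shiftE 0 (shiftE 0 s)) b)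
/-- Substitute in a list of operation cases. -/
def substCases (k : ℕ) (s : Expr) : List OpCase → List OpCase
  | [] => []
  | h :: t => substCase k s h :: substCases k s t
/-- Substitute `s` for de Bruijn index `k` in a computation. -/
def substC (k : ℕ) (s : Expr) : Comp → Comp
  | .ite e c₁ c₂ => .ite (substE k s e) (substC k s c₁) (substC k s c₂)
  | .iszero e => .iszero (substE k s e)
  | .pred e => .pred (substE k s e)
  | .absurd e => .absurd (substE k s e)
  | .app e₁ e₂ => .app (substE k s e₁) (substE k s e₂)
  | .ret e => .ret (substE k s e)
  | .call e₁ op e₂ c =>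
      .call (substE k s e₁) op (substE k s e₂) (substC (k + 1) (shiftE 0 s) c)
  | .letin c₁ c₂ => .letin (substC k s c₁) (substC (k + 1) (shiftE 0 s) c₂)
  | .letval e c => .letval (substE k s e) (substC (k + 1) (shiftE 0 s) c)
  | .letrec c₁ c₂ =>
      .letrec (substC (k + 2) (shiftE 0 (shiftE 0 s)) c₁) (substC (k + 1) (shiftE 0 s) c₂)
  | .withhandle e c => .withhandle (substE k s e) (substC k s c)
end

/-- The small-step operational semantics of core Eff. -/
inductive Step : Comp → Comp → Prop where
  | ifTrue {c₁ c₂} : Step (.ite .tt c₁ c₂) c₁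
  | ifFalse {c₁ c₂} : Step (.ite .ff c₁ c₂) c₂
  | iszeroZero : Step (.iszero .zero) (.ret .tt)
  | iszeroSucc {e} : Step (.iszero (.succ e)) (.ret .ff)
  | predZero : Step (.pred .zero) (.ret .zero)
  | predSucc {e} : Step (.pred (.succ e)) (.ret e)
  | beta {b e} : Step (.app (.fn b) e) (substC 0 e b)
  | letStep {c₁ c₁' c₂} : Step c₁ c₁' → Step (.letin c₁ c₂) (.letin c₁' c₂)
  | letRet {e c} : Step (.letin (.ret e) c) (substC 0 e c)
  | letOp {e₁ op e₂ c₁ c₂} :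
      Step (.letin (.call e₁ op e₂ c₁) c₂) (.call e₁ op e₂ (.letin c₁ (shiftC 1 c₂)))
  | letval {e c} : Step (.letval e c) (substC 0 e c)
  | letrec {c₁ c₂} :
      Step (.letrec c₁ c₂)
        (substC 0 (.fn (.letrec (shiftC 2 c₁) (substC 0 (.var 1) (shiftC 2 c₁)))) c₂)
  | withStep {e c c'} : Step c c' → Step (.withhandle e c) (.withhandle e c')
  | withRet {cv cases e} :
      Step (.withhandle (.handler cv cases) (.ret e)) (substC 0 e cv)
  | withOpHandled {cv cases ins op cb e c} :
      OpCase.mk (.inst ins) op cb ∈ cases →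
      Step (.withhandle (.handler cv cases) (.call (.inst ins) op e c))
        (substC 0 e
          (substC 0 (shiftE 0 (.fn (.withhandle (shiftE 0 (.handler cv cases)) c))) cb))
  | withOpSkip {cv cases ins op e c} :
      (∀ cb, OpCase.mk (.inst ins) op cb ∉ cases) →
      Step (.withhandle (.handler cv cases) (.call (.inst ins) op e c))
        (.call (.inst ins) op e (.withhandle (shiftE 0 (.handler cv cases)) c))

/-- An effect signature: the effect of each instance, the effect of each operation
symbol, and parameter/result types of each operation symbol. -/
structure Sig where
  instEff : ℕ → ℕ
  opEff : ℕ → ℕ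
  paramTy : ℕ → Ty
  resultTy : ℕ → Ty

/-- Ground (basic) types. -/
def Ground : Ty → Prop
  | .bool => True
  | .nat => True
  | .unit => True
  | .empty => True
  | _ => False

mutual
/-- The typing judgement `Γ ⊢ e : A` for expressions of core Eff. -/
inductive HasTypeE (S : Sig) : List Ty → Expr → Ty → Prop where
  | var {Γ n A} : Γ[n]? = some A → HasTypeE S Γ (.var n) A
  | tt {Γ} : HasTypeE S Γ .tt .bool
  | ff {Γ} : HasTypeE S Γ .ff .bool
  | zero {Γ} : HasTypeE S Γ .zero .nat
  | succ {Γ e} : HasTypeE S Γ e .nat → HasTypeE S Γ (.succ e) .nat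
  | unit {Γ} : HasTypeE S Γ .unit .unit
  | inst {Γ ins} {R : Region} :
      ins ∈ R → (∀ i ∈ R, S.instEff i = S.instEff ins) →
      HasTypeE S Γ (.inst ins) (.eff (S.instEff ins) R)
  | fn {Γ b A B Δ} : HasTypeC S (A :: Γ) b B Δ → HasTypeE S Γ (.fn b) (.fn A B Δ)
  | handler {Γ cv cases A Δ B Δ'} (Rs : ℕ → Region) :
      HasTypeC S (A :: Γ) cv B Δ' →
      (∀ i (hi : i < cases.length),
        HasTypeE S Γ (cases.get ⟨i, hi⟩).instExpr
          (.eff (S.opEff (cases.get ⟨i, hi⟩).opSym) (Rs i))) →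
      (∀ i (hi : i < cases.length),
        HasTypeC S
          (Ty.fn (S.resultTy (cases.get ⟨i, hi⟩).opSym) B Δ' ::
            S.paramTy (cases.get ⟨i, hi⟩).opSym :: Γ)
          (cases.get ⟨i, hi⟩).body B Δ') →
      (∀ p ∈ Δ,
        (∃ i, ∃ hi : i < cases.length,
          (cases.get ⟨i, hi⟩).opSym = p.2 ∧ Rs i = {p.1}) ∨ p ∈ Δ') →
      HasTypeE S Γ (.handler cv cases) (.hand A Δ B Δ')
  | sub {Γ e A A'} : HasTypeE S Γ e A → SubTy A A' → HasTypeE S Γ e A'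
/-- The typing judgement `Γ ⊢ c : A ! Δ` for computations of core Eff. -/
inductive HasTypeC (S : Sig) : List Ty → Comp → Ty → Dirt → Prop where
  | ite {Γ e c₁ c₂ A Δ} :
      HasTypeE S Γ e .bool → HasTypeC S Γ c₁ A Δ → HasTypeC S Γ c₂ A Δ →
      HasTypeC S Γ (.ite e c₁ c₂) A Δ
  | iszero {Γ e Δ} : HasTypeE S Γ e .nat → HasTypeC S Γ (.iszero e) .bool Δ
  | pred {Γ e Δ} : HasTypeE S Γ e .nat → HasTypeC S Γ (.pred e) .nat Δ
  | absurd {Γ e A Δ} : HasTypeE S Γ e .empty → HasTypeC S Γ (.absurd e) A Δ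
  | app {Γ e₁ e₂ A B Δ} :
      HasTypeE S Γ e₁ (.fn A B Δ) → HasTypeE S Γ e₂ A → HasTypeC S Γ (.app e₁ e₂) B Δ
  | ret {Γ e A Δ} : HasTypeE S Γ e A → HasTypeC S Γ (.ret e) A Δ
  | call {Γ e₁ op e₂ c A Δ} {R : Region} :
      HasTypeE S Γ e₁ (.eff (S.opEff op) R) →
      HasTypeE S Γ e₂ (S.paramTy op) →
      HasTypeC S (S.resultTy op :: Γ) c A Δ →
      (∀ i ∈ R, (i, op) ∈ Δ) →
      HasTypeC S Γ (.call e₁ op e₂ c) A Δ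
  | letin {Γ c₁ c₂ A B Δ} :
      HasTypeC S Γ c₁ A Δ → HasTypeC S (A :: Γ) c₂ B Δ →
      HasTypeC S Γ (.letin c₁ c₂) B Δ
  | letval {Γ e c A B Δ} :
      HasTypeE S Γ e A → HasTypeC S Γ (substC 0 e c) B Δ →
      HasTypeC S Γ (.letval e c) B Δ
  | letrec {Γ c₁ c₂ A B Δ B' Δ'} :
      HasTypeC S (A :: Ty.fn A B Δ :: Γ) c₁ B Δ →
      HasTypeC S (Ty.fn A B Δ :: Γ) c₂ B' Δ' →
      HasTypeC S Γ (.letrec c₁ c₂) B' Δ'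
  | withhandle {Γ e c A Δ B Δ'} :
      HasTypeE S Γ e (.hand A Δ B Δ') → HasTypeC S Γ c A Δ →
      HasTypeC S Γ (.withhandle e c) B Δ'
  | sub {Γ c A A' Δ Δ'} :
      HasTypeC S Γ c A Δ → SubTy A A' → Δ ⊆ Δ' → HasTypeC S Γ c A' Δ'
end

theorem SubTy.refl : ∀ A, SubTy A A
  | .bool => .bool
  | .nat => .nat
  | .unit => .unit
  | .empty => .empty
  | .fn A B _ => .fn (SubTy.refl A) (SubTy.refl B) subset_rfl
  | .eff _ _ => .eff subset_rfl
  | .hand A _ B _ => .hand (SubTy.refl A) subset_rfl (SubTy.refl B) subset_rfl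

theorem SubTy.trans {A B C : Ty} (h₁ : SubTy A B) (h₂ : SubTy B C) : SubTy A C := by
  induction B generalizing A C with
  | bool | nat | unit | empty => cases h₁; exact h₂
  | fn B₁ B₂ Δ ih₁ ih₂ =>
    cases h₁ with | fn ha hb hd =>
    cases h₂ with | fn ha' hb' hd' =>
    exact .fn (ih₁ ha' ha) (ih₂ hb hb') (hd.trans hd')
  | eff E R =>
    cases h₁ with | eff h =>
    cases h₂ with | eff h' =>
    exact .eff (h.trans h')
  | hand B₁ Δ₁ B₂ Δ₂ ih₁ ih₂ =>
    cases h₁ with | hand ha hd₁ hb hd₂ =>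
    cases h₂ with | hand ha' hd₁' hb' hd₂' =>
    exact .hand (ih₁ ha' ha) (hd₁'.trans hd₁) (ih₂ hb hb') (hd₂.trans hd₂')

mutual
theorem shiftE_shiftE {n m : ℕ} (h : n ≤ m) (e : Expr) :
    shiftE n (shiftE m e) = shiftE (m + 1) (shiftE n e) := by
  cases e with
  | var v => simp only [shiftE]; split_ifs <;> simp only [shiftE] <;> split_ifs <;> grind
  | _ =>
    simp only [shiftE, shiftE_shiftE h, shiftC_shiftC (Nat.succ_le_succ h),
      shiftCases_shiftCases h]
theorem shiftCases_shiftCases {n m : ℕ} (h : n ≤ m) (l : List OpCase) :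
    shiftCases n (shiftCases m l) = shiftCases (m + 1) (shiftCases n l) := by
  rcases l with _ | ⟨⟨e, op, b⟩, t⟩ <;>
    simp only [shiftCases, shiftCase, shiftE_shiftE h, shiftC_shiftC (Nat.add_le_add_right h 2),
      shiftCases_shiftCases h]
theorem shiftC_shiftC {n m : ℕ} (h : n ≤ m) (c : Comp) :
    shiftC n (shiftC m c) = shiftC (m + 1) (shiftC n c) := by
  cases c <;> simp only [shiftC, shiftE_shiftE h, shiftC_shiftC h,
    shiftC_shiftC (Nat.succ_le_succ h), shiftC_shiftC (Nat.add_le_add_right h 2)]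
end

theorem shiftE_zero_shiftE (n : ℕ) (s : Expr) :
    shiftE 0 (shiftE n s) = shiftE (n + 1) (shiftE 0 s) :=
  shiftE_shiftE n.zero_le s

mutual
theorem substE_shiftE (k : ℕ) (s e : Expr) : substE k s (shiftE k e) = e := by
  cases e with
  | var v => simp only [shiftE]; split_ifs <;> simp only [substE] <;> split_ifs <;> grind
  | _ => simp only [shiftE, substE, substE_shiftE, substC_shiftC, substCases_shiftCases]
theorem substCases_shiftCases (k : ℕ) (s : Expr) (l : List OpCase) :
    substCases k s (shiftCases k l) = l := by
  rcases l with _ | ⟨⟨e, op, b⟩, t⟩ <;>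
    simp only [shiftCases, shiftCase, substCases, substCase, substE_shiftE, substC_shiftC,
      substCases_shiftCases]
theorem substC_shiftC (k : ℕ) (s : Expr) (c : Comp) : substC k s (shiftC k c) = c := by
  cases c <;> simp only [shiftC, substC, substE_shiftE, substC_shiftC]
end

mutual
theorem shiftE_substE_of_le {n k : ℕ} (h : n ≤ k) (s e : Expr) :
    shiftE n (substE k s e) = substE (k + 1) (shiftE n s) (shiftE n e) := by
  cases e with
  | var v =>
    simp only [substE, shiftE]; split_ifs <;> simp only [substE, shiftE] <;> split_ifs <;> grind
  | _ =>
    simp only [shiftE, substE, shiftC_substC_of_le (Nat.succ_le_succ h),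
      shiftCases_substCases_of_le h, shiftE_substE_of_le h, shiftE_zero_shiftE]
theorem shiftCases_substCases_of_le {n k : ℕ} (h : n ≤ k) (s : Expr) (l : List OpCase) :
    shiftCases n (substCases k s l) = substCases (k + 1) (shiftE n s) (shiftCases n l) := by
  rcases l with _ | ⟨⟨e, op, b⟩, t⟩ <;>
    simp only [shiftCases, shiftCase, substCases, substCase, shiftE_substE_of_le h,
      shiftC_substC_of_le (Nat.add_le_add_right h 2), shiftCases_substCases_of_le h,
      shiftE_zero_shiftE]
theorem shiftC_substC_of_le {n k : ℕ} (h : n ≤ k) (s : Expr) (c : Comp) :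
    shiftC n (substC k s c) = substC (k + 1) (shiftE n s) (shiftC n c) := by
  cases c <;> simp only [shiftC, substC, shiftE_substE_of_le h, shiftC_substC_of_le h,
    shiftC_substC_of_le (Nat.succ_le_succ h), shiftC_substC_of_le (Nat.add_le_add_right h 2),
    shiftE_zero_shiftE]
end

theorem shiftE_zero_substE (k : ℕ) (t s : Expr) :
    shiftE 0 (substE k t s) = substE (k + 1) (shiftE 0 t) (shiftE 0 s) :=
  shiftE_substE_of_le k.zero_le t s

mutual
theorem shiftE_substE_of_ge {k n : ℕ} (h : k ≤ n) (s e : Expr) :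
    shiftE n (substE k s e) = substE k (shiftE n s) (shiftE (n + 1) e) := by
  cases e with
  | var v =>
    simp only [substE, shiftE]; split_ifs <;> simp only [substE, shiftE] <;> split_ifs <;> grind
  | _ =>
    simp only [shiftE, substE, shiftC_substC_of_ge (Nat.succ_le_succ h),
      shiftCases_substCases_of_ge h, shiftE_substE_of_ge h, shiftE_zero_shiftE]
theorem shiftCases_substCases_of_ge {k n : ℕ} (h : k ≤ n) (s : Expr) (l : List OpCase) :
    shiftCases n (substCases k s l) = substCases k (shiftE n s) (shiftCases (n + 1) l) := by
  rcases l with _ | ⟨⟨e, op, b⟩, t⟩ <;>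
    simp only [shiftCases, shiftCase, substCases, substCase, shiftE_substE_of_ge h,
      shiftC_substC_of_ge (Nat.add_le_add_right h 2), shiftCases_substCases_of_ge h,
      shiftE_zero_shiftE]
theorem shiftC_substC_of_ge {k n : ℕ} (h : k ≤ n) (s : Expr) (c : Comp) :
    shiftC n (substC k s c) = substC k (shiftE n s) (shiftC (n + 1) c) := by
  cases c <;> simp only [shiftC, substC, shiftE_substE_of_ge h, shiftC_substC_of_ge h,
    shiftC_substC_of_ge (Nat.succ_le_succ h), shiftC_substC_of_ge (Nat.add_le_add_right h 2),
    shiftE_zero_shiftE]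
end

mutual
theorem substE_substE {j k : ℕ} (h : j ≤ k) (t s e : Expr) :
    substE k t (substE j s e) = substE j (substE k t s) (substE (k + 1) (shiftE j t) e) := by
  cases e with
  | var v =>
    simp only [substE]
    split_ifs <;> simp only [substE, substE_shiftE] <;> (try split_ifs) <;> grind
  | _ =>
    simp only [substE, substC_substC (Nat.succ_le_succ h), substCases_substCases h,
      substE_substE h, shiftE_zero_substE, shiftE_zero_shiftE]
termination_by structural e
theorem substCases_substCases {j k : ℕ} (h : j ≤ k) (t s : Expr) (l : List OpCase) :
    substCases k t (substCases j s l) =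
      substCases j (substE k t s) (substCases (k + 1) (shiftE j t) l) := by
  rcases l with _ | ⟨⟨e, op, b⟩, l⟩ <;>
    simp only [substCases, substCase, substE_substE h,
      substC_substC (Nat.add_le_add_right h 2), substCases_substCases h,
      shiftE_zero_substE, shiftE_zero_shiftE]
termination_by structural l
theorem substC_substC {j k : ℕ} (h : j ≤ k) (t s : Expr) (c : Comp) :
    substC k t (substC j s c) = substC j (substE k t s) (substC (k + 1) (shiftE j t) c) := by
  cases c <;> simp only [substC, substE_substE h, substC_substC h,
    substC_substC (Nat.succ_le_succ h), substC_substC (Nat.add_le_add_right h 2),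
    shiftE_zero_substE, shiftE_zero_shiftE]
termination_by structural c
end

def OpCase.map (g : Expr → Expr) (h : Comp → Comp) : OpCase → OpCase
  | .mk e op b => .mk (g e) op (h b)

@[simp] theorem OpCase.opSym_map (g : Expr → Expr) (h : Comp → Comp) (x : OpCase) :
    (x.map g h).opSym = x.opSym := by cases x; rfl
@[simp] theorem OpCase.instExpr_map (g : Expr → Expr) (h : Comp → Comp) (x : OpCase) :
    (x.map g h).instExpr = g x.instExpr := by cases x; rfl
@[simp] theorem OpCase.body_map (g : Expr → Expr) (h : Comp → Comp) (x : OpCase) :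
    (x.map g h).body = h x.body := by cases x; rfl

theorem shiftCases_eq_map (k : ℕ) (l : List OpCase) :
    shiftCases k l = l.map (OpCase.map (shiftE k) (shiftC (k + 2))) := by
  induction l with
  | nil => simp only [shiftCases, List.map_nil]
  | cons x l ih => cases x; simp only [shiftCases, shiftCase, OpCase.map, ih, List.map_cons]

theorem substCases_eq_map (k : ℕ) (s : Expr) (l : List OpCase) :
    substCases k s l =
      l.map (OpCase.map (substE k s) (substC (k + 2) (shiftE 0 (shiftE 0 s)))) := by
  induction l with
  | nil => simp only [substCases, List.map_nil]
  | cons x l ih => cases x; simp only [substCases, substCase, OpCase.map, ih, List.map_cons]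

section Typing

variable {S : Sig}

theorem HasTypeE.handler_map {Γ : List Ty} {cv : Comp} {cases : List OpCase} {A B : Ty}
    {Δ Δ' : Dirt} (g : Expr → Expr) (h : Comp → Comp) (Rs : ℕ → Region)
    (hcv : HasTypeC S (A :: Γ) cv B Δ')
    (hinst : ∀ i (hi : i < cases.length),
      HasTypeE S Γ (g (cases.get ⟨i, hi⟩).instExpr)
        (.eff (S.opEff (cases.get ⟨i, hi⟩).opSym) (Rs i)))
    (hbody : ∀ i (hi : i < cases.length),
      HasTypeC S
        (Ty.fn (S.resultTy (cases.get ⟨i, hi⟩).opSym) B Δ' ::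
          S.paramTy (cases.get ⟨i, hi⟩).opSym :: Γ)
        (h (cases.get ⟨i, hi⟩).body) B Δ')
    (hcov : ∀ p ∈ Δ,
      (∃ i, ∃ hi : i < cases.length, (cases.get ⟨i, hi⟩).opSym = p.2 ∧ Rs i = {p.1}) ∨ p ∈ Δ') :
    HasTypeE S Γ (.handler cv (cases.map (OpCase.map g h))) (.hand A Δ B Δ') := by
  refine .handler Rs hcv (fun i hi => ?_) (fun i hi => ?_) (fun p hp => ?_)
  · simpa using hinst i (by simpa using hi)
  · simpa using hbody i (by simpa using hi)
  · simpa using hcov p hp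

mutual
theorem HasTypeE.weaken (T : Ty) : ∀ {Γ e A}, HasTypeE S Γ e A → ∀ {Γ₁ Γ₂ : List Ty},
    Γ = Γ₁ ++ Γ₂ → HasTypeE S (Γ₁ ++ T :: Γ₂) (shiftE Γ₁.length e) A
  | _, _, _, .var h, _, _, hΓ => by
    subst hΓ; simp only [shiftE]; split_ifs <;> exact .var (by grind)
  | _, _, _, .tt, _, _, _ => by simp only [shiftE]; exact .tt
  | _, _, _, .ff, _, _, _ => by simp only [shiftE]; exact .ff
  | _, _, _, .zero, _, _, _ => by simp only [shiftE]; exact .zero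
  | _, _, _, .succ h, _, _, hΓ => by simp only [shiftE]; exact .succ (h.weaken T hΓ)
  | _, _, _, .unit, _, _, _ => by simp only [shiftE]; exact .unit
  | _, _, _, .inst h₁ h₂, _, _, _ => by simp only [shiftE]; exact .inst h₁ h₂
  | _, _, _, .fn h, _, _, hΓ => by
    simp only [shiftE]; exact .fn (h.weaken T (Γ₁ := _ :: _) (by rw [hΓ]; rfl))
  | _, _, _, .handler Rs hcv hinst hbody hcov, _, _, hΓ => by
    simp only [shiftE, shiftCases_eq_map]
    exact .handler_map _ _ Rs (hcv.weaken T (Γ₁ := _ :: _) (by rw [hΓ]; rfl))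
      (fun i hi => (hinst i hi).weaken T hΓ)
      (fun i hi => (hbody i hi).weaken T (Γ₁ := _ :: _ :: _) (by rw [hΓ]; rfl)) hcov
  | _, _, _, .sub h hA, _, _, hΓ => .sub (h.weaken T hΓ) hA
theorem HasTypeC.weaken (T : Ty) : ∀ {Γ c A Δ}, HasTypeC S Γ c A Δ → ∀ {Γ₁ Γ₂ : List Ty},
    Γ = Γ₁ ++ Γ₂ → HasTypeC S (Γ₁ ++ T :: Γ₂) (shiftC Γ₁.length c) A Δ
  | _, _, _, _, .ite he h₁ h₂, _, _, hΓ => by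
    simp only [shiftC]; exact .ite (he.weaken T hΓ) (h₁.weaken T hΓ) (h₂.weaken T hΓ)
  | _, _, _, _, .iszero h, _, _, hΓ => by simp only [shiftC]; exact .iszero (h.weaken T hΓ)
  | _, _, _, _, .pred h, _, _, hΓ => by simp only [shiftC]; exact .pred (h.weaken T hΓ)
  | _, _, _, _, .absurd h, _, _, hΓ => by simp only [shiftC]; exact .absurd (h.weaken T hΓ)
  | _, _, _, _, .app h₁ h₂, _, _, hΓ => by
    simp only [shiftC]; exact .app (h₁.weaken T hΓ) (h₂.weaken T hΓ)
  | _, _, _, _, .ret h, _, _, hΓ => by simp only [shiftC]; exact .ret (h.weaken T hΓ)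
  | _, _, _, _, .call h₁ h₂ hc hR, _, _, hΓ => by
    simp only [shiftC]
    exact .call (h₁.weaken T hΓ) (h₂.weaken T hΓ) (hc.weaken T (Γ₁ := _ :: _) (by rw [hΓ]; rfl)) hR
  | _, _, _, _, .letin h₁ h₂, _, _, hΓ => by
    simp only [shiftC]
    exact .letin (h₁.weaken T hΓ) (h₂.weaken T (Γ₁ := _ :: _) (by rw [hΓ]; rfl))
  | _, _, _, _, .letval he hc, Γ₁, _, hΓ => by
    simp only [shiftC]
    refine .letval (he.weaken T hΓ) ?_
    rw [← shiftC_substC_of_ge Γ₁.length.zero_le]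
    exact hc.weaken T hΓ
  | _, _, _, _, .letrec h₁ h₂, _, _, hΓ => by
    simp only [shiftC]
    exact .letrec (h₁.weaken T (Γ₁ := _ :: _ :: _) (by rw [hΓ]; rfl))
      (h₂.weaken T (Γ₁ := _ :: _) (by rw [hΓ]; rfl))
  | _, _, _, _, .withhandle he hc, _, _, hΓ => by
    simp only [shiftC]; exact .withhandle (he.weaken T hΓ) (hc.weaken T hΓ)
  | _, _, _, _, .sub h hA hΔ, _, _, hΓ => .sub (h.weaken T hΓ) hA hΔ
end

theorem HasTypeE.shift_zero {Γ : List Ty} {e : Expr} {A : Ty} (T : Ty) (h : HasTypeE S Γ e A) :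
    HasTypeE S (T :: Γ) (shiftE 0 e) A :=
  h.weaken T (Γ₁ := []) rfl

mutual
theorem HasTypeE.subst : ∀ {Γ e A}, HasTypeE S Γ e A → ∀ {Γ₁ Γ₂ : List Ty} {U : Ty} {s : Expr},
    HasTypeE S (Γ₁ ++ Γ₂) s U → Γ = Γ₁ ++ U :: Γ₂ →
    HasTypeE S (Γ₁ ++ Γ₂) (substE Γ₁.length s e) A
  | _, _, A, .var h, Γ₁, _, U, _, hs, hΓ => by
    subst hΓ
    simp only [substE]
    split_ifs with hn
    · obtain rfl : U = A := by simpa [hn] using h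
      exact hs
    all_goals exact .var (by grind)
  | _, _, _, .tt, _, _, _, _, _, _ => by simp only [substE]; exact .tt
  | _, _, _, .ff, _, _, _, _, _, _ => by simp only [substE]; exact .ff
  | _, _, _, .zero, _, _, _, _, _, _ => by simp only [substE]; exact .zero
  | _, _, _, .succ h, _, _, _, _, hs, hΓ => by simp only [substE]; exact .succ (h.subst hs hΓ)
  | _, _, _, .unit, _, _, _, _, _, _ => by simp only [substE]; exact .unit
  | _, _, _, .inst h₁ h₂, _, _, _, _, _, _ => by simp only [substE]; exact .inst h₁ h₂
  | _, _, _, .fn h, _, _, _, _, hs, hΓ => by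
    simp only [substE]; exact .fn (h.subst (Γ₁ := _ :: _) (hs.shift_zero _) (by rw [hΓ]; rfl))
  | _, _, _, .handler Rs hcv hinst hbody hcov, _, _, _, _, hs, hΓ => by
    simp only [substE, substCases_eq_map]
    exact .handler_map _ _ Rs (hcv.subst (Γ₁ := _ :: _) (hs.shift_zero _) (by rw [hΓ]; rfl))
      (fun i hi => (hinst i hi).subst hs hΓ)
      (fun i hi => (hbody i hi).subst (Γ₁ := _ :: _ :: _) ((hs.shift_zero _).shift_zero _)
        (by rw [hΓ]; rfl))
      hcov
  | _, _, _, .sub h hA, _, _, _, _, hs, hΓ => .sub (h.subst hs hΓ) hA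
theorem HasTypeC.subst : ∀ {Γ c A Δ}, HasTypeC S Γ c A Δ →
    ∀ {Γ₁ Γ₂ : List Ty} {U : Ty} {s : Expr}, HasTypeE S (Γ₁ ++ Γ₂) s U → Γ = Γ₁ ++ U :: Γ₂ →
    HasTypeC S (Γ₁ ++ Γ₂) (substC Γ₁.length s c) A Δ
  | _, _, _, _, .ite he h₁ h₂, _, _, _, _, hs, hΓ => by
    simp only [substC]; exact .ite (he.subst hs hΓ) (h₁.subst hs hΓ) (h₂.subst hs hΓ)
  | _, _, _, _, .iszero h, _, _, _, _, hs, hΓ => by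
    simp only [substC]; exact .iszero (h.subst hs hΓ)
  | _, _, _, _, .pred h, _, _, _, _, hs, hΓ => by simp only [substC]; exact .pred (h.subst hs hΓ)
  | _, _, _, _, .absurd h, _, _, _, _, hs, hΓ => by
    simp only [substC]; exact .absurd (h.subst hs hΓ)
  | _, _, _, _, .app h₁ h₂, _, _, _, _, hs, hΓ => by
    simp only [substC]; exact .app (h₁.subst hs hΓ) (h₂.subst hs hΓ)
  | _, _, _, _, .ret h, _, _, _, _, hs, hΓ => by simp only [substC]; exact .ret (h.subst hs hΓ)
  | _, _, _, _, .call h₁ h₂ hc hR, _, _, _, _, hs, hΓ => by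
    simp only [substC]
    exact .call (h₁.subst hs hΓ) (h₂.subst hs hΓ)
      (hc.subst (Γ₁ := _ :: _) (hs.shift_zero _) (by rw [hΓ]; rfl)) hR
  | _, _, _, _, .letin h₁ h₂, _, _, _, _, hs, hΓ => by
    simp only [substC]
    exact .letin (h₁.subst hs hΓ) (h₂.subst (Γ₁ := _ :: _) (hs.shift_zero _) (by rw [hΓ]; rfl))
  | _, _, _, _, .letval he hc, Γ₁, _, _, _, hs, hΓ => by
    simp only [substC]
    refine .letval (he.subst hs hΓ) ?_
    rw [← substC_substC Γ₁.length.zero_le]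
    exact hc.subst hs hΓ
  | _, _, _, _, .letrec h₁ h₂, _, _, _, _, hs, hΓ => by
    simp only [substC]
    exact .letrec
      (h₁.subst (Γ₁ := _ :: _ :: _) ((hs.shift_zero _).shift_zero _) (by rw [hΓ]; rfl))
      (h₂.subst (Γ₁ := _ :: _) (hs.shift_zero _) (by rw [hΓ]; rfl))
  | _, _, _, _, .withhandle he hc, _, _, _, _, hs, hΓ => by
    simp only [substC]; exact .withhandle (he.subst hs hΓ) (hc.subst hs hΓ)
  | _, _, _, _, .sub h hA hΔ, _, _, _, _, hs, hΓ => .sub (h.subst hs hΓ) hA hΔ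
end

theorem HasTypeC.subst_zero {Γ : List Ty} {U : Ty} {s : Expr} {c : Comp} {A : Ty} {Δ : Dirt}
    (h : HasTypeC S (U :: Γ) c A Δ) (hs : HasTypeE S Γ s U) :
    HasTypeC S Γ (substC 0 s c) A Δ :=
  h.subst (Γ₁ := []) hs rfl

theorem HasTypeE.inst_singleton (Γ : List Ty) (ins : ℕ) :
    HasTypeE S Γ (.inst ins) (.eff (S.instEff ins) {ins}) :=
  .inst (Finset.mem_singleton_self ins) (fun i hi => by rw [Finset.mem_singleton.mp hi])

theorem HasTypeC.call_inv : ∀ {Γ c A Δ}, HasTypeC S Γ c A Δ →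
    ∀ {e₁ : Expr} {op : ℕ} {e₂ : Expr} {k : Comp}, c = .call e₁ op e₂ k →
    ∃ R : Region, HasTypeE S Γ e₁ (.eff (S.opEff op) R) ∧ HasTypeE S Γ e₂ (S.paramTy op) ∧
      HasTypeC S (S.resultTy op :: Γ) k A Δ ∧ ∀ i ∈ R, (i, op) ∈ Δ
  | _, _, _, _, .call h₁ h₂ hk hR, _, _, _, _, hc => by
    cases hc; exact ⟨_, h₁, h₂, hk, hR⟩
  | _, _, _, _, .sub h hA hΔ, _, _, _, _, hc =>
    let ⟨R, h₁, h₂, hk, hR⟩ := h.call_inv hc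
    ⟨R, h₁, h₂, .sub hk hA hΔ, fun i hi => hΔ (hR i hi)⟩
  | _, _, _, _, .ite .., _, _, _, _, hc | _, _, _, _, .iszero _, _, _, _, _, hc
  | _, _, _, _, .pred _, _, _, _, _, hc | _, _, _, _, .absurd _, _, _, _, _, hc
  | _, _, _, _, .app .., _, _, _, _, hc | _, _, _, _, .ret _, _, _, _, _, hc
  | _, _, _, _, .letin .., _, _, _, _, hc | _, _, _, _, .letval .., _, _, _, _, hc
  | _, _, _, _, .letrec .., _, _, _, _, hc | _, _, _, _, .withhandle .., _, _, _, _, hc => by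
    cases hc

/-- The premises of the typing rule `HasTypeE.handler`. -/
def HandlerTyping (S : Sig) (Γ : List Ty) (cv : Comp) (cases : List OpCase) (A : Ty) (Δ : Dirt)
    (B : Ty) (Δ' : Dirt) : Prop :=
  ∃ Rs : ℕ → Region,
    HasTypeC S (A :: Γ) cv B Δ' ∧
    (∀ i (hi : i < cases.length),
      HasTypeE S Γ (cases.get ⟨i, hi⟩).instExpr
        (.eff (S.opEff (cases.get ⟨i, hi⟩).opSym) (Rs i))) ∧
    (∀ i (hi : i < cases.length),
      HasTypeC S
        (Ty.fn (S.resultTy (cases.get ⟨i, hi⟩).opSym) B Δ' ::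
          S.paramTy (cases.get ⟨i, hi⟩).opSym :: Γ)
        (cases.get ⟨i, hi⟩).body B Δ') ∧
    (∀ p ∈ Δ,
      (∃ i, ∃ hi : i < cases.length, (cases.get ⟨i, hi⟩).opSym = p.2 ∧ Rs i = {p.1}) ∨ p ∈ Δ')

/-- Canonical forms of closed values, phrased as the β- and handler reductions consume them: a
function through the substitution instances of its body, a handler at its principal type. -/
def Canonical (S : Sig) (e : Expr) : Ty → Prop
  | .bool => e = .tt ∨ e = .ff
  | .nat => e = .zero ∨ ∃ e', e = .succ e' ∧ HasTypeE S [] e' .nat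
  | .unit => e = .unit
  | .empty => False
  | .fn A B Δ => ∃ b, e = .fn b ∧ ∀ v, HasTypeE S [] v A → HasTypeC S [] (substC 0 v b) B Δ
  | .eff E R => ∃ ins ∈ R, e = .inst ins ∧ S.instEff ins = E
  | .hand A Δ B Δ' => ∃ cv cases A₀ Δ₀ B₀ Δ₀', e = .handler cv cases ∧
      HandlerTyping S [] cv cases A₀ Δ₀ B₀ Δ₀' ∧ SubTy A A₀ ∧ Δ ⊆ Δ₀ ∧ SubTy B₀ B ∧ Δ₀' ⊆ Δ'

theorem Canonical.mono {e : Expr} {A A' : Ty} (h : Canonical S e A) (hA : SubTy A A') :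
    Canonical S e A' := by
  cases hA with
  | bool | nat | unit | empty => exact h
  | fn hA hB hΔ =>
    obtain ⟨b, rfl, hb⟩ := h
    exact ⟨b, rfl, fun v hv => .sub (hb v (.sub hv hA)) hB hΔ⟩
  | eff hR =>
    obtain ⟨ins, hins, rfl, hE⟩ := h
    exact ⟨ins, hR hins, rfl, hE⟩
  | hand hA hΔ hB hΔ' =>
    obtain ⟨cv, cases, A₀, Δ₀, B₀, Δ₀', rfl, hH, hA₀, hΔ₀, hB₀, hΔ₀'⟩ := h
    exact ⟨cv, cases, A₀, Δ₀, B₀, Δ₀', rfl, hH, hA.trans hA₀, hΔ.trans hΔ₀, hB₀.trans hB,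
      hΔ₀'.trans hΔ'⟩

theorem HasTypeE.canonical : ∀ {Γ e A}, HasTypeE S Γ e A → Γ = [] → Canonical S e A
  | _, _, _, .var h, hΓ => by subst hΓ; simp at h
  | _, _, _, .tt, _ => .inl rfl
  | _, _, _, .ff, _ => .inr rfl
  | _, _, _, .zero, _ => .inl rfl
  | _, _, _, .succ h, hΓ => .inr ⟨_, rfl, hΓ ▸ h⟩
  | _, _, _, .unit, _ => rfl
  | _, _, _, .inst h _, _ => ⟨_, h, rfl, rfl⟩
  | _, _, _, .fn h, hΓ => by subst hΓ; exact ⟨_, rfl, fun _ hv => h.subst_zero hv⟩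
  | _, _, _, .handler Rs hcv hinst hbody hcov, hΓ => by
    subst hΓ
    exact ⟨_, _, _, _, _, _, rfl, ⟨Rs, hcv, hinst, hbody, hcov⟩, .refl _, subset_rfl, .refl _,
      subset_rfl⟩
  | _, _, _, .sub h hA, hΓ => (h.canonical hΓ).mono hA

namespace HandlerTyping

variable {Γ : List Ty} {cv : Comp} {cases : List OpCase} {A B : Ty} {Δ Δ' : Dirt}

theorem hasTypeE (hH : HandlerTyping S Γ cv cases A Δ B Δ') :
    HasTypeE S Γ (.handler cv cases) (.hand A Δ B Δ') :=
  let ⟨Rs, hcv, hinst, hbody, hcov⟩ := hH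
  .handler Rs hcv hinst hbody hcov

theorem body_of_mem (hH : HandlerTyping S Γ cv cases A Δ B Δ') {e : Expr} {op : ℕ} {cb : Comp}
    (hcb : OpCase.mk e op cb ∈ cases) :
    HasTypeC S (Ty.fn (S.resultTy op) B Δ' :: S.paramTy op :: Γ) cb B Δ' := by
  obtain ⟨_, -, -, hbody, -⟩ := hH
  obtain ⟨⟨i, hi⟩, hget⟩ := List.mem_iff_get.mp hcb
  have := hbody i hi
  rwa [hget] at this

theorem mem_of_unhandled (hH : HandlerTyping S [] cv cases A Δ B Δ') {ins op : ℕ}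
    (hp : (ins, op) ∈ Δ) (hunhandled : ∀ cb, OpCase.mk (.inst ins) op cb ∉ cases) :
    (ins, op) ∈ Δ' := by
  obtain ⟨Rs, -, hinst, -, hcov⟩ := hH
  refine (hcov _ hp).resolve_left ?_
  -- a case covering `ins#op` has its instance expression in the region `{ins}`, so it is
  -- `.inst ins` and would handle the call
  rintro ⟨i, hi, hop, hR⟩
  obtain ⟨j, hj, hinstExpr, -⟩ := (hinst i hi).canonical rfl
  rw [hR, Finset.mem_singleton] at hj
  rcases hget : cases.get ⟨i, hi⟩ with ⟨e, op', cb⟩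
  simp only [hget, OpCase.instExpr, OpCase.opSym] at hinstExpr hop
  subst hinstExpr hj hop
  exact hunhandled cb (hget ▸ List.get_mem cases _)

end HandlerTyping

theorem HasTypeC.handled_reduct {cv : Comp} {cases : List OpCase} {A B : Ty} {Δ Δ' : Dirt}
    {ins op : ℕ} {cb : Comp} {v : Expr} {k : Comp} (hH : HandlerTyping S [] cv cases A Δ B Δ')
    (hcb : OpCase.mk (.inst ins) op cb ∈ cases) (hv : HasTypeE S [] v (S.paramTy op))
    (hk : HasTypeC S [S.resultTy op] k A Δ) :
    HasTypeC S []
      (substC 0 v (substC 0 (shiftE 0 (.fn (.withhandle (shiftE 0 (.handler cv cases)) k))) cb))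
      B Δ' :=
  have hcont : HasTypeE S [] (.fn (.withhandle (shiftE 0 (.handler cv cases)) k))
      (.fn (S.resultTy op) B Δ') :=
    .fn (.withhandle (hH.hasTypeE.shift_zero _) hk)
  ((hH.body_of_mem hcb).subst_zero (hcont.shift_zero _)).subst_zero hv

theorem HasTypeC.forwarded_reduct {cv : Comp} {cases : List OpCase} {A B : Ty} {Δ Δ' : Dirt}
    {ins op : ℕ} {v : Expr} {k : Comp} (hH : HandlerTyping S [] cv cases A Δ B Δ')
    (hunhandled : ∀ cb, OpCase.mk (.inst ins) op cb ∉ cases) (hp : (ins, op) ∈ Δ)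
    (hins : S.instEff ins = S.opEff op) (hv : HasTypeE S [] v (S.paramTy op))
    (hk : HasTypeC S [S.resultTy op] k A Δ) :
    HasTypeC S [] (.call (.inst ins) op v (.withhandle (shiftE 0 (.handler cv cases)) k)) B Δ' :=
  .call (hins ▸ HasTypeE.inst_singleton [] ins) hv
    (.withhandle (hH.hasTypeE.shift_zero _) hk)
    (fun _ hi => Finset.mem_singleton.mp hi ▸ hH.mem_of_unhandled hp hunhandled)

theorem HasTypeE.letrec_unfold {Γ : List Ty} {c₁ : Comp} {A B : Ty} {Δ : Dirt}
    (h : HasTypeC S (A :: .fn A B Δ :: Γ) c₁ B Δ) :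
    HasTypeE S Γ (.fn (.letrec (shiftC 2 c₁) (substC 0 (.var 1) (shiftC 2 c₁)))) (.fn A B Δ) :=
  have h' : HasTypeC S (A :: .fn A B Δ :: A :: Γ) (shiftC 2 c₁) B Δ :=
    h.weaken A (Γ₁ := [A, .fn A B Δ]) rfl
  .fn (.letrec h' (h'.subst_zero (.var rfl)))

def Safe (S : Sig) (c : Comp) (A : Ty) (Δ : Dirt) : Prop :=
  (∃ e, c = .ret e ∧ HasTypeE S [] e A) ∨
  (∃ ins op e c', c = .call (.inst ins) op e c' ∧ (ins, op) ∈ Δ) ∨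
  (∃ c', Step c c' ∧ HasTypeC S [] c' A Δ)

namespace Safe

variable {c : Comp} {A B : Ty} {Δ Δ' : Dirt}

theorem of_step {c' : Comp} (hst : Step c c') (h : HasTypeC S [] c' A Δ) : Safe S c A Δ :=
  .inr (.inr ⟨c', hst, h⟩)

theorem sub (hs : Safe S c A Δ) (hA : SubTy A B) (hΔ : Δ ⊆ Δ') : Safe S c B Δ' := by
  rcases hs with ⟨e, rfl, he⟩ | ⟨ins, op, e, k, rfl, hp⟩ | ⟨c', hst, h⟩
  · exact .inl ⟨e, rfl, .sub he hA⟩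
  · exact .inr (.inl ⟨ins, op, e, k, rfl, hΔ hp⟩)
  · exact of_step hst (.sub h hA hΔ)

theorem letin {c₂ : Comp} (h₁ : HasTypeC S [] c A Δ) (h₂ : HasTypeC S [A] c₂ B Δ)
    (hs : Safe S c A Δ) : Safe S (.letin c c₂) B Δ := by
  rcases hs with ⟨v, rfl, hv⟩ | ⟨ins, op, v, k, rfl, -⟩ | ⟨c', hst, h₁'⟩
  · exact of_step .letRet (h₂.subst_zero hv)
  · obtain ⟨R, hi, hv, hk, hR⟩ := h₁.call_inv rfl
    exact of_step .letOp (.call hi hv (.letin hk (h₂.weaken _ (Γ₁ := [A]) rfl)) hR)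
  · exact of_step (.letStep hst) (.letin h₁' h₂)

theorem withhandle {e : Expr} (he : HasTypeE S [] e (.hand A Δ B Δ'))
    (hc : HasTypeC S [] c A Δ) (hs : Safe S c A Δ) : Safe S (.withhandle e c) B Δ' := by
  obtain ⟨cv, cases, A₀, Δ₀, B₀, Δ₀', rfl, hH, hA, hΔ, hB, hΔ'⟩ := he.canonical rfl
  rcases hs with ⟨v, rfl, hv⟩ | ⟨ins, op, v, k, rfl, hp⟩ | ⟨c', hst, hc'⟩
  · obtain ⟨_, hcv, -⟩ := hH
    exact of_step .withRet (.sub (hcv.subst_zero (.sub hv hA)) hB hΔ')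
  · obtain ⟨R, hi, hv, hk, -⟩ := hc.call_inv rfl
    replace hk : HasTypeC S [S.resultTy op] k A₀ Δ₀ := .sub hk hA hΔ
    by_cases hhandled : ∃ cb, OpCase.mk (.inst ins) op cb ∈ cases
    · obtain ⟨cb, hcb⟩ := hhandled
      exact of_step (.withOpHandled hcb) (.sub (.handled_reduct hH hcb hv hk) hB hΔ')
    · simp only [not_exists] at hhandled
      obtain ⟨_, -, ⟨⟩, hins⟩ := hi.canonical rfl
      exact of_step (.withOpSkip hhandled)
        (.sub (.forwarded_reduct hH hhandled (hΔ hp) hins hv hk) hB hΔ')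
  · exact of_step (.withStep hst) (.withhandle he hc')

end Safe

theorem HasTypeC.safe : ∀ {Γ c A Δ}, HasTypeC S Γ c A Δ → Γ = [] → Safe S c A Δ
  | _, _, _, _, .ite he h₁ h₂, hΓ => by
    subst hΓ
    rcases (he.canonical rfl : _ ∨ _) with rfl | rfl
    · exact .of_step .ifTrue h₁
    · exact .of_step .ifFalse h₂
  | _, _, _, _, .iszero he, hΓ => by
    subst hΓ
    rcases (he.canonical rfl : _ ∨ _) with rfl | ⟨_, rfl, -⟩
    · exact .of_step .iszeroZero (.ret .tt)
    · exact .of_step .iszeroSucc (.ret .ff)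
  | _, _, _, _, .pred he, hΓ => by
    subst hΓ
    rcases (he.canonical rfl : _ ∨ _) with rfl | ⟨_, rfl, he'⟩
    · exact .of_step .predZero (.ret .zero)
    · exact .of_step .predSucc (.ret he')
  | _, _, _, _, .absurd he, hΓ => (he.canonical hΓ).elim
  | _, _, _, _, .app he₁ he₂, hΓ => by
    subst hΓ
    obtain ⟨b, rfl, hb⟩ := he₁.canonical rfl
    exact .of_step .beta (hb _ he₂)
  | _, _, _, _, .ret he, hΓ => .inl ⟨_, rfl, hΓ ▸ he⟩
  | _, _, _, _, .call he₁ _ _ hR, hΓ => by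
    subst hΓ
    obtain ⟨ins, hins, rfl, -⟩ := he₁.canonical rfl
    exact .inr (.inl ⟨ins, _, _, _, rfl, hR ins hins⟩)
  | _, _, _, _, .letin h₁ h₂, hΓ => by
    have ih := h₁.safe hΓ
    subst hΓ
    exact .letin h₁ h₂ ih
  | _, _, _, _, .letval _ h, hΓ => by subst hΓ; exact .of_step .letval h
  | _, _, _, _, .letrec h₁ h₂, hΓ => by
    subst hΓ; exact .of_step .letrec (h₂.subst_zero (.letrec_unfold h₁))
  | _, _, _, _, .withhandle he hc, hΓ => by
    have ih := hc.safe hΓ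
    subst hΓ
    exact .withhandle he hc ih
  | _, _, _, _, .sub h hA hΔ, hΓ => (h.safe hΓ).sub hA hΔ

end Typing

/-- Safety of the core Eff effect system (progress and preservation): a closed,
well-typed computation `⊢ c : A ! Δ` is either a returned value, an operation call
`ins#op(e; y.c')` with `ins#op ∈ Δ`, or it steps to a computation of the same type. -/
theorem safety (S : Sig)
    (hground : ∀ op, Ground (S.paramTy op) ∧ Ground (S.resultTy op))
    {c : Comp} {A : Ty} {Δ : Dirt} (h : HasTypeC S [] c A Δ) :
    (∃ e, c = .ret e ∧ HasTypeE S [] e A) ∨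
    (∃ ins op e c', c = .call (.inst ins) op e c' ∧ (ins, op) ∈ Δ) ∨
    (∃ c', Step c c' ∧ HasTypeC S [] c' A Δ) :=
  h.safe rfl
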